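/- arXiv:math/0209224 — 6 statements merged into one kernel-verified Lean document; each statement's English description precedes it below -/
import Mathlib

section
/- Let R be a commutative ring and let A be an associative unital R-algebra that is free as an R-module with basis (b_i)_{i∈I}, where b_{i₀} = 1 for a distinguished index i₀. For a ∈ A and i ∈ I write κ(i,a) for the coefficient of b_i in a. Suppose there is a map σ: I → I with σ∘σ = id such that κ(m, b_i·b_j) = κ(i, b_m·b_{σ(j)}) for all i,j,m ∈ I (the normalized table-algebra axiom (T3)). Then the R-linear functional t: A → R defined by t(a) = κ(i₀, a) is a trace, i.e. t(x·y) = t(y·x) for all x, y ∈ A. -/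
/-- Let `A` be an associative unital `R`-algebra, free as an `R`-module
with basis `(b i)_{i ∈ I}` where `b i₀ = 1`, and let `κ i a` denote the coefficient of
`b i` in `a` (i.e. `b.repr a i`).  Suppose `σ : I → I` is an involution satisfying the
normalized table-algebra axiom (T3):
`κ m (b i * b j) = κ i (b m * b (σ j))` for all `i j m`.
Then `t a := κ i₀ a` is a trace: `t (x * y) = t (y * x)` for all `x y ∈ A`. -/
theorem table_algebra_trace {R A I : Type*} [CommRing R] [Ring A] [Algebra R A]
    (b : Module.Basis I R A) (i₀ : I) (hb₀ : b i₀ = 1)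
    (σ : I → I) (hσ : ∀ i, σ (σ i) = i)
    (hT3 : ∀ i j m : I, b.repr (b i * b j) m = b.repr (b m * b (σ j)) i) :
    ∀ x y : A, b.repr (x * y) i₀ = b.repr (y * x) i₀ := by
  have key : ∀ i j : I, b.repr (b i * b j) i₀ = b.repr (b j * b i) i₀ := by
    intro i j
    rw [hT3 i j i₀, hT3 j i i₀, hb₀, one_mul, one_mul, b.repr_self, b.repr_self]
    all_goals
      classical
      simp only [Finsupp.single_apply]
      by_cases h : σ j = i
      · subst h; simp [hσ]
      · have h' : σ i ≠ j := fun hc => h (by rw [← hc, hσ])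
        simp [h, h']
  let g : A →ₗ[R] R := (Finsupp.lapply i₀).comp b.repr.toLinearMap
  let F : A →ₗ[R] A →ₗ[R] R := (LinearMap.mul R A).compr₂ g
  have hFG : F = F.flip := b.ext fun i => b.ext fun j => key i j
  intro x y
  exact DFunLike.congr_fun (DFunLike.congr_fun hFG x) y
end

section
/- Let r ≥ 1 and let V_r = ℤ[X]/(U_r) be the Verlinde algebra, with u_i the image of U_i in V_r. Then for all integers n, n' with 0 ≤ n ≤ n' < r, the Clebsch–Gordan rule holds in V_r: u_n · u_{n'} = Σ_{i=0}^{min(n, r−n'−1)} u_{n'−n+2i}. -/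
/-!
`U n` is Mathlib's rescaled Chebyshev polynomial `S ℤ n`, which is defined for all integer
indices. Over any commutative ring the untruncated rule `S m * S n = ∑_{i ≤ n} S (m - n + 2 i)`
holds for every integer `m`, by induction on `n` through the three-term recurrence. Modulo `S r`
the identity `S (r + j) + S (r - j) = C j * S r` makes `j ↦ S j` odd about `r`, so the terms of
the sum past the truncation point, whose indices run symmetrically from `2 r - (n + n')` to
`n + n'`, cancel in pairs, the middle one being `S r = 0`.
-/

open Polynomial

/-- The polynomials `U n` with `U 0 = 1`, `U 1 = X`, `U (n+1) = X * U n - U (n-1)`. -/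
noncomputable def U (n : ℕ) : Polynomial ℤ := Polynomial.dickson 2 1 n

/-- The Verlinde algebra `V r = ℤ[X]/(U r)`. -/
abbrev Verlinde (r : ℕ) : Type := Polynomial ℤ ⧸ Ideal.span {U r}

/-- `u r i` is the image of `U i` in the Verlinde algebra `V r`. -/
noncomputable def u (r i : ℕ) : Verlinde r :=
  Ideal.Quotient.mk (Ideal.span {U r}) (U i)

namespace Polynomial.Chebyshev

variable (R : Type*) [CommRing R]

theorem S_mul_S_natCast_eq_sum (m : ℤ) (n : ℕ) :
    S R m * S R n = ∑ i ∈ Finset.range (n + 1), S R (m - n + 2 * i) := by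
  induction n using Nat.twoStepInduction with
  | zero => simp
  | one => simp [Finset.sum_range_succ, mul_comm]
  | more n ih₀ ih₁ =>
    have hX : ∀ j, X * S R j = S R (j + 1) + S R (j - 1) := fun j => by
      rw [S_add_one]; ring
    push_cast at ih₁ ⊢
    rw [S_add_two, mul_sub, mul_left_comm, ih₁, ih₀, Finset.mul_sum]
    simp only [hX, Finset.sum_add_distrib]
    rw [Finset.sum_range_succ (fun i : ℕ => S R (m - (n + 1) + 2 * i + 1)),
      Finset.sum_range_succ (n := n + 2)]
    have e₁ (i : ℕ) : m - (n + 1) + 2 * i + 1 = m - n + 2 * i := by ring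
    have e₂ (i : ℕ) : m - (n + 1) + 2 * i - 1 = m - (n + 2) + 2 * i := by ring
    simp only [e₁, e₂]
    push_cast
    ring_nf

theorem S_add_add_S_sub (m k : ℤ) : S R (m + k) + S R (m - k) = C R k * S R m := by
  induction k using Chebyshev.induct' with
  | zero => simp [C_zero, two_mul]
  | one => rw [C_one, S_add_one, sub_add_cancel]
  | add_two k ih₁ ih₀ =>
    have h₁ := S_add_two R (m + k)
    have h₂ := S_sub_two R (m - k)
    have h₃ := C_add_two R k
    linear_combination (norm := ring_nf) h₁ + h₂ - S R m * h₃ + (X : R[X]) * ih₁ - ih₀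
  | neg k ih => rw [C_neg, ← ih, sub_neg_eq_add, ← sub_eq_add_neg, add_comm]

variable {R}

theorem mk_S_add_add_mk_S_sub {I : Ideal R[X]} {c : ℤ} (hc : S R c ∈ I) (j : ℤ) :
    Ideal.Quotient.mk I (S R (c + j)) + Ideal.Quotient.mk I (S R (c - j)) = 0 := by
  rw [← map_add, Ideal.Quotient.eq_zero_iff_mem, S_add_add_S_sub]
  exact I.mul_mem_left _ hc

end Polynomial.Chebyshev

theorem sum_Ico_eq_zero_of_odd_about {M : Type*} [AddCommGroup M] (f : ℤ → M) {c : ℤ}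
    (hc : f c = 0) (hf : ∀ j, f (c + j) + f (c - j) = 0) {a b : ℕ} {d : ℤ}
    (hab : d + a + b = c + 1) :
    ∑ i ∈ Finset.Ico a b, f (d + 2 * i) = 0 := by
  refine Finset.sum_involution (fun i _ => a + b - 1 - i) (fun i hi => ?_) (fun i hi hne => ?_)
    (fun i hi => ?_) (fun i hi => ?_)
  all_goals rw [Finset.mem_Ico] at hi
  · have hj : d + 2 * ((a + b - 1 - i : ℕ) : ℤ) = c - (d + 2 * i - c) := by omega
    simpa only [hj, add_sub_cancel] using hf (d + 2 * i - c)
  · refine fun hfix => hne ?_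
    rw [show d + 2 * i = c by omega, hc]
  · rw [Finset.mem_Ico]; omega
  · omega

theorem U_eq_chebyshev_S (n : ℕ) : U n = Chebyshev.S ℤ n := dickson_two_one_eq_chebyshev_S ℤ n

theorem verlinde_clebsch_gordan_general (r : ℕ) (n n' : ℕ)
    (hnn' : n ≤ n') (hn' : n' < r) :
    u r n * u r n'
      = ∑ i ∈ Finset.range (min n (r - n' - 1) + 1), u r (n' - n + 2 * i) := by
  set s : ℤ → Verlinde r := fun j => Ideal.Quotient.mk _ (Chebyshev.S ℤ j)
  have hu (k : ℕ) : u r k = s k := congrArg _ (U_eq_chebyshev_S k)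
  have hSr : Chebyshev.S ℤ r ∈ Ideal.span {U r} := Ideal.subset_span (U_eq_chebyshev_S r).symm
  have hprod : u r n * u r n' = ∑ i ∈ Finset.range (n + 1), s (n' - n + 2 * i) := by
    simp only [hu, s, ← map_mul, ← map_sum, mul_comm (Chebyshev.S ℤ n),
      Chebyshev.S_mul_S_natCast_eq_sum]
  rw [hprod]
  simp only [hu, Nat.cast_add, Nat.cast_sub hnn', Nat.cast_mul, Nat.cast_ofNat]
  rcases le_total n (r - n' - 1) with h | h
  · rw [min_eq_left h]
  · rw [min_eq_right h, ← Finset.sum_range_add_sum_Ico _ (by omega : r - n' - 1 + 1 ≤ n + 1),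
      sum_Ico_eq_zero_of_odd_about s (Ideal.Quotient.eq_zero_iff_mem.2 hSr)
        (Chebyshev.mk_S_add_add_mk_S_sub hSr) (by omega), add_zero]

/-- For `r ≥ 1` and `0 ≤ n ≤ n' < r`, the Clebsch–Gordan rule holds in
the Verlinde algebra `V r`:
`u n * u n' = ∑_{i=0}^{min n (r - n' - 1)} u (n' - n + 2 i)`. -/
theorem verlinde_clebsch_gordan (r : ℕ) (hr : 1 ≤ r) (n n' : ℕ)
    (hnn' : n ≤ n') (hn' : n' < r) :
    u r n * u r n'
      = ∑ i ∈ Finset.range (min n (r - n' - 1) + 1), u r (n' - n + 2 * i) :=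
  verlinde_clebsch_gordan_general r n n' hnn' hn'
end

section
/- Let r ≥ 1 and let V_r = ℤ[X]/(U_r) with ℤ-basis u_0, …, u_{r−1} (the images of U_0, …, U_{r−1}). Then for all 0 ≤ i, j, m < r: the coefficient of u_m in the basis expansion of u_i · u_j is a nonnegative integer, and it equals the coefficient of u_i in the basis expansion of u_m · u_j. (Thus V_r with this basis is a normalized table algebra whose anti-automorphism is the identity map.) -/
open Polynomial

/-- The structure constants. -/
def c (r i j m : ℕ) : ℤ :=
  if i ≤ j + m ∧ j ≤ i + m ∧ m ≤ i + j ∧ i + j + m + 2 ≤ 2*r ∧ (i + j + m) % 2 = 0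
  then 1 else 0

lemma U_zero : U 0 = 1 := by
  simp [U, Polynomial.dickson_zero]
  norm_num

lemma U_one : U 1 = X := by
  simp [U, Polynomial.dickson_one]

lemma U_add_two (n : ℕ) : U (n+2) = X * U (n+1) - U n := by
  simp [U, Polynomial.dickson_add_two]

lemma Ustep (j : ℕ) : ∀ d : ℕ, U (d + j + 1) * U (j + 1) = U (d + j + 2) * U j + U d := by
  induction j with
  | zero =>
    intro d
    rw [U_one, U_zero, show d + 0 + 2 = d + 2 from rfl, U_add_two d,
      show d + 0 + 1 = d + 1 from rfl]
    ring
  | succ j ih =>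
    intro d
    have h1 := ih d
    rw [show d + (j+1) + 1 = d + j + 2 from rfl, show d + (j+1) + 2 = d + j + 3 from rfl,
      U_add_two j, show d + j + 3 = (d + j + 1) + 2 from rfl, U_add_two (d + j + 1)]
    linear_combination h1

lemma prodsum (j : ℕ) : ∀ d : ℕ, U (d + j) * U j = ∑ k ∈ Finset.range (j+1), U (d + 2*k) := by
  induction j with
  | zero =>
    intro d
    simp [U_zero]
  | succ j ih =>
    intro d
    rw [show d + (j+1) = d + j + 1 from rfl, Ustep j d,
      show d + j + 2 = (d + 2) + j from by ring, ih (d+2),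
      Finset.sum_range_succ' (fun k => U (d + 2*k)) (j+1)]
    congr 1
    exact Finset.sum_congr rfl (fun k _ => by congr 1; omega)

lemma Dmul (t : ℕ) : ∀ s : ℕ, dickson 1 1 t * U (s + t) = U (s + 2*t) + U s := by
  induction t using Nat.strong_induction_on with
  | _ t ih =>
    match t with
    | 0 =>
      intro s
      simp [Polynomial.dickson_zero]
      ring_nf
    | 1 =>
      intro s
      rw [Polynomial.dickson_one, show s + 2*1 = s + 1 + 1 + 0 from by ring,
        show s + 1 + 1 + 0 = (s) + 2 from by ring, U_add_two s]
      ring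
    | (t+2) =>
      intro s
      have h1 := ih (t+1) (by omega) (s+2)
      have h2 := ih (t+1) (by omega) s
      have h3 := ih t (by omega) (s+2)
      rw [show s + 2 + (t+1) = s + t + 3 from by ring, show s + 2 + 2*(t+1) = s + 2*t + 4 from by ring] at h1
      rw [show s + (t+1) = s + t + 1 from by ring, show s + 2*(t+1) = s + 2*t + 2 from by ring] at h2
      rw [show s + 2 + t = s + t + 2 from by ring, show s + 2 + 2*t = s + 2*t + 2 from by ring] at h3
      have hD : (dickson 1 1 (t+2) : Polynomial ℤ) = X * dickson 1 1 (t+1) - dickson 1 1 t := by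
        rw [Polynomial.dickson_add_two, Polynomial.C_1, one_mul]
      have hX : U (s + t + 3) = X * U (s + t + 2) - U (s + t + 1) := by
        rw [show s + t + 3 = (s + t + 1) + 2 from rfl]
        exact U_add_two (s + t + 1)
      rw [show s + (t+2) = s + t + 2 from rfl, show s + 2*(t+2) = s + 2*t + 4 from by ring, hD]
      linear_combination h1 + h2 - h3 - dickson 1 1 (t+1) * hX

lemma u_r_zero (r : ℕ) : u r r = 0 := by
  unfold u
  rw [Ideal.Quotient.eq_zero_iff_mem]
  exact Ideal.mem_span_singleton_self _

lemma u_fold (r t : ℕ) (ht : t ≤ r) : u r (r + t) = - u r (r - t) := by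
  have h := Dmul t (r - t)
  rw [show r - t + t = r from by omega, show r - t + 2*t = r + t from by omega] at h
  have hz : (Ideal.Quotient.mk (Ideal.span {U r})) (dickson 1 1 t * U r) = 0 := by
    rw [Ideal.Quotient.eq_zero_iff_mem]
    exact Ideal.mul_mem_left _ _ (Ideal.mem_span_singleton_self _)
  have h2 : u r (r + t) + u r (r - t) = 0 := by
    unfold u
    rw [← map_add, ← h]
    exact hz
  linear_combination h2

lemma red (r n : ℕ) (hr : 1 ≤ r) (hn : n + 2 ≤ 2*r) :
    u r n = ∑ m ∈ Finset.range r,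
      ((if m = n then (1:ℤ) else 0) - (if m + n = 2*r then 1 else 0)) • u r m := by
  rcases lt_trichotomy n r with h | h | h
  · rw [Finset.sum_congr rfl (g := fun m => if m = n then u r m else 0) (fun m hm => by
      rw [Finset.mem_range] at hm
      rw [if_neg (show ¬ (m + n = 2*r) from by omega)]
      split_ifs with hh <;> simp [hh])]
    rw [Finset.sum_ite_eq' (Finset.range r) n (u r), if_pos (Finset.mem_range.mpr h)]
  · rw [h, u_r_zero]
    symm
    apply Finset.sum_eq_zero
    intro m hm
    rw [Finset.mem_range] at hm
    rw [if_neg (by omega), if_neg (by omega)]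
    simp
  · have h1 : u r n = - u r (2*r - n) := by
      have := u_fold r (n - r) (by omega)
      rw [show r + (n - r) = n from by omega, show r - (n - r) = 2*r - n from by omega] at this
      exact this
    rw [Finset.sum_congr rfl (g := fun m => if m = 2*r - n then -u r m else 0) (fun m hm => by
      rw [Finset.mem_range] at hm
      rw [if_neg (show ¬ (m = n) from by omega),
        if_congr (show (m + n = 2*r) ↔ (m = 2*r - n) from by omega) rfl rfl]
      split_ifs with hh <;> simp [hh])]
    rw [Finset.sum_ite_eq' (Finset.range r) (2*r - n) (fun m => -u r m),
      if_pos (Finset.mem_range.mpr (by omega)), h1]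

lemma cnt (m d : ℕ) : ∀ N : ℕ, (∑ k ∈ Finset.range N, if m = d + 2*k then (1:ℤ) else 0)
    = if d ≤ m ∧ m < d + 2*N ∧ (m + d) % 2 = 0 then 1 else 0 := by
  intro N
  induction N with
  | zero => simp; omega
  | succ N ih =>
    rw [Finset.sum_range_succ, ih]
    split_ifs <;> omega

lemma key' (r : ℕ) (hr : 1 ≤ r) (i j : ℕ) (hij : i ≤ j) (hj : j < r) :
    u r i * u r j = ∑ m ∈ Finset.range r, c r i j m • u r m := by
  have hps := prodsum i (j - i)
  rw [show j - i + i = j from by omega] at hps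
  have h0 : u r i * u r j = ∑ k ∈ Finset.range (i+1), u r (j - i + 2*k) := by
    unfold u
    rw [← map_mul, mul_comm, hps, map_sum]
  rw [h0,
    Finset.sum_congr rfl (fun k hk => red r (j - i + 2*k) hr (by
      rw [Finset.mem_range] at hk; omega)),
    Finset.sum_comm]
  apply Finset.sum_congr rfl
  intro m hm
  rw [Finset.mem_range] at hm
  rw [← Finset.sum_smul]
  congr 1
  rw [Finset.sum_sub_distrib, cnt,
    Finset.sum_congr rfl (fun k _ => by
      rw [if_congr (show (m + (j - i + 2*k) = 2*r) ↔ (2*r - m = j - i + 2*k) from by omega)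
        rfl rfl]),
    cnt]
  simp only [c]
  split_ifs <;> omega

lemma key (r : ℕ) (hr : 1 ≤ r) (i j : ℕ) (hi : i < r) (hj : j < r) :
    u r i * u r j = ∑ m ∈ Finset.range r, c r i j m • u r m := by
  rcases le_total i j with h | h
  · exact key' r hr i j h hj
  · rw [mul_comm, key' r hr j i h hi]
    apply Finset.sum_congr rfl
    intro m _
    congr 1
    simp only [c]
    exact if_congr (by omega) rfl rfl

/-- Let `r ≥ 1` and let `b` be the ℤ-basis `u 0, …, u (r-1)` of the
Verlinde algebra `V r`.  Then for all `i, j, m < r`, the coefficient of `u m` in the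
basis expansion of `u i * u j` is a nonnegative integer and coincides with the
coefficient of `u i` in the basis expansion of `u m * u j`; i.e. `V r` with this basis
is a normalized table algebra whose anti-automorphism is the identity map. -/
theorem verlinde_table_algebra (r : ℕ) (hr : 1 ≤ r)
    (b : Module.Basis (Fin r) ℤ (Verlinde r)) (hb : ∀ i : Fin r, b i = u r i) :
    ∀ i j m : Fin r,
      0 ≤ b.repr (u r i * u r j) m ∧
        b.repr (u r i * u r j) m = b.repr (u r m * u r j) i := by
  have hrep : ∀ x y z : Fin r, b.repr (u r ↑x * u r ↑y) z = c r ↑x ↑y ↑z := by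
    intro x y z
    rw [key r hr ↑x ↑y x.isLt y.isLt]
    have h1 : ∑ m' ∈ Finset.range r, c r ↑x ↑y m' • u r m'
        = ∑ m' : Fin r, c r ↑x ↑y ↑m' • b m' := by
      simp only [hb]
      exact (Fin.sum_univ_eq_sum_range (fun m' => c r ↑x ↑y m' • u r m') r).symm
    rw [h1, map_sum]
    simp only [map_smul, Module.Basis.repr_self, Finsupp.smul_single, smul_eq_mul, mul_one]
    rw [Finset.sum_apply']
    simp only [Finsupp.single_apply]
    rw [Finset.sum_ite_eq' Finset.univ z (fun m' : Fin r => c r ↑x ↑y ↑m'),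
      if_pos (Finset.mem_univ z)]
  intro i j m
  refine ⟨?_, ?_⟩
  · rw [hrep i j m]
    simp only [c]
    split_ifs <;> norm_num
  · rw [hrep i j m, hrep m j i]
    simp only [c]
    exact if_congr (by omega) rfl rfl
end

section
/- Let r ≥ 1, let V_r = ℤ[X]/(U_r), and write w = u_{r−1} (the image of U_{r−1} in V_r). Then for every integer i with 0 ≤ i < r, one has u_i · w = u_{r−1−i} in V_r; in particular w² = u_0 = 1. -/
open Polynomial

/-! Extending `U n = S n` (Mathlib's Vieta–Fibonacci polynomials) to `n : ℤ`, one has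
`S m * S n - S (m - 1) * S (n + 1) = S (n - m)`: both sides satisfy the recurrence
`f (m + 1) = X * f m - f (m - 1)` in `m` and agree at `m = 0, 1`. For `m = i`, `n = r - 1` the
correction term `S (i - 1) * S r` vanishes modulo `U r`. -/

theorem Polynomial.Chebyshev.S_mul_S_sub_S_mul_S (R : Type*) [CommRing R] (m n : ℤ) :
    S R m * S R n - S R (m - 1) * S R (n + 1) = S R (n - m) := by
  induction m using Chebyshev.induct with
  | zero => simp
  | one => simp [S_sub_one R n]
  | add_two k h1 h0 =>
    linear_combination (norm := ring_nf) X * h1 - h0 + S R n * S_add_two R k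
      - S R (n + 1) * S_add_one R k - S_sub_one R (n - k - 1)
  | neg_add_one k h0 h1 =>
    linear_combination (norm := ring_nf) X * h0 - h1 + S R n * S_sub_one R (-k)
      - S R (n + 1) * S_sub_one R (-k - 1) - S_add_one R (n + k)

theorem u_zero (r : ℕ) : u r 0 = 1 := by
  simp [u, U_eq_chebyshev_S]

theorem U_mul_U_pred_sub_U {r i : ℕ} (hi : i < r) :
    U i * U (r - 1) - U (r - 1 - i) = Chebyshev.S ℤ (i - 1) * U r := by
  have hcast : ((r - 1 : ℕ) : ℤ) = r - 1 ∧ ((r - 1 - i : ℕ) : ℤ) = r - 1 - i := by omega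
  simp only [U_eq_chebyshev_S, hcast]
  linear_combination (norm := ring_nf) Chebyshev.S_mul_S_sub_S_mul_S ℤ i (r - 1)

theorem u_mul_u_pred {r i : ℕ} (hi : i < r) : u r i * u r (r - 1) = u r (r - 1 - i) := by
  rw [u, u, u, ← map_mul, Ideal.Quotient.eq, Ideal.mem_span_singleton, U_mul_U_pred_sub_U hi]
  exact dvd_mul_left _ _

/-- Let `r ≥ 1` and let `w = u (r-1)` in the Verlinde algebra `V r`.
Then `u i * w = u (r-1-i)` for all `0 ≤ i < r`; in particular `w ^ 2 = 1`. -/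
theorem verlinde_mul_top (r : ℕ) (hr : 1 ≤ r) :
    (∀ i : ℕ, i < r → u r i * u r (r - 1) = u r (r - 1 - i)) ∧
      u r (r - 1) * u r (r - 1) = 1 := by
  refine ⟨fun i hi => u_mul_u_pred hi, ?_⟩
  rw [u_mul_u_pred (by omega : r - 1 < r), Nat.sub_self, u_zero]
end

section
/- Consider the ℂ-algebras V_3 = ℂ[X]/(X³ − 2X) with y the image of X and z the image of X² − 1, and V_2 = ℂ[X]/(X² − 1) with z' the image of X. Then there exists a ℂ-algebra homomorphism φ : V_3 → V_2 such that φ(1) = 1, φ(y) = (z' + 1)/√2 and φ(z) = z'. -/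
open Polynomial

/-- Consider the ℂ-algebras `V₃ = ℂ[X]/(X³ - 2X)`, with `y` the image
of `X` and `z` the image of `X² - 1`, and `V₂ = ℂ[X]/(X² - 1)`, with `z'` the image of
`X`.  Then there is a ℂ-algebra homomorphism `φ : V₃ → V₂` with `φ 1 = 1`,
`φ y = (z' + 1)/√2` and `φ z = z'`. -/
theorem verlinde_three_to_two :
    let I₃ : Ideal (Polynomial ℂ) := Ideal.span {(X : Polynomial ℂ) ^ 3 - 2 * X}
    let I₂ : Ideal (Polynomial ℂ) := Ideal.span {(X : Polynomial ℂ) ^ 2 - 1}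
    let y : Polynomial ℂ ⧸ I₃ := Ideal.Quotient.mk I₃ X
    let z : Polynomial ℂ ⧸ I₃ := Ideal.Quotient.mk I₃ (X ^ 2 - 1)
    let z' : Polynomial ℂ ⧸ I₂ := Ideal.Quotient.mk I₂ X
    ∃ φ : (Polynomial ℂ ⧸ I₃) →ₐ[ℂ] (Polynomial ℂ ⧸ I₂),
      φ 1 = 1 ∧
        φ y = ((Real.sqrt 2 : ℂ))⁻¹ • (z' + 1) ∧
        φ z = z' := by
  intro I₃ I₂ y z z'
  set c : ℂ := ((Real.sqrt 2 : ℂ))⁻¹ with hc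
  have h2 : ((Real.sqrt 2 : ℝ) : ℂ) ^ 2 = 2 := by
    norm_cast
    rw [Real.sq_sqrt]; norm_num
  have hc2 : c ^ 2 = 2⁻¹ := by rw [hc, inv_pow, h2]
  set u : Polynomial ℂ ⧸ I₂ := Ideal.Quotient.mk I₂ X with hudef
  have hu : u ^ 2 = 1 := by
    have h0 : Ideal.Quotient.mk I₂ ((X : Polynomial ℂ) ^ 2 - 1) = 0 :=
      Ideal.Quotient.eq_zero_iff_mem.2 (Ideal.subset_span (Set.mem_singleton _))
    rw [map_sub, map_pow, map_one, sub_eq_zero] at h0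
    exact h0
  set b : Polynomial ℂ ⧸ I₂ := algebraMap ℂ _ c with hb
  have hb2 : b ^ 2 * 2 = 1 := by
    rw [hb, ← map_pow, hc2, ← map_ofNat (algebraMap ℂ (Polynomial ℂ ⧸ I₂)) 2,
      ← map_mul, inv_mul_cancel₀ (two_ne_zero), map_one]
  set a : Polynomial ℂ ⧸ I₂ := c • (u + 1) with ha
  have ha' : a = b * (u + 1) := Algebra.smul_def c (u + 1)
  set f : Polynomial ℂ →ₐ[ℂ] Polynomial ℂ ⧸ I₂ := aeval a with hf
  have hfX : f X = a := aeval_X a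
  have hkey : f ((X : Polynomial ℂ) ^ 3 - 2 * X) = 0 := by
    rw [hf, map_sub, map_mul, map_pow, aeval_X, map_ofNat, ha']
    linear_combination (b ^ 3 * (u + 3)) * hu + (2 * b * (u + 1)) * hb2
  have hker : ∀ p ∈ I₃, f p = 0 := by
    intro p hp
    rw [Ideal.mem_span_singleton] at hp
    obtain ⟨r, hr⟩ := hp
    rw [hr, map_mul, hkey, zero_mul]
  refine ⟨Ideal.Quotient.liftₐ I₃ f hker, ?_, ?_, ?_⟩
  · simp
  · show Ideal.Quotient.liftₐ I₃ f hker (Ideal.Quotient.mk I₃ X) = c • (u + 1)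
    erw [Ideal.Quotient.liftₐ_apply, Ideal.Quotient.lift_mk, AlgHom.coe_toRingHom, hfX, ha]
  · show Ideal.Quotient.liftₐ I₃ f hker (Ideal.Quotient.mk I₃ (X ^ 2 - 1)) = z'
    erw [Ideal.Quotient.liftₐ_apply, Ideal.Quotient.lift_mk, AlgHom.coe_toRingHom]
    rw [hf, map_sub, map_pow, aeval_X, map_one, ha']
    show (b * (u + 1)) ^ 2 - 1 = u
    linear_combination b ^ 2 * hu + (u + 1) * hb2
end

section
/- Let 𝒜 = ℤ[v, v⁻¹] be the ring of Laurent polynomials over ℤ, let 𝒜⁻ = ℤ[v⁻¹] ⊆ 𝒜, and let bar : 𝒜 → 𝒜 be the ring involution sending v to v⁻¹. Let M be a free 𝒜-module with basis (c_w)_{w∈W}, let B : M × M → 𝒜 be a symmetric 𝒜-bilinear form such that B(c_w, c_{w'}) − δ_{w,w'} ∈ v⁻¹𝒜⁻ for all w, w' ∈ W, and let D : M → M be an additive involution satisfying D(a·m) = bar(a)·D(m) for all a ∈ 𝒜, m ∈ M, and D(c_w) = c_w for all w ∈ W. Suppose x ∈ M satisfies D(x) = x and B(x, x) − 1 ∈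 v⁻¹𝒜⁻. Then there exists w ∈ W such that x = c_w or x = −c_w. -/
open LaurentPolynomial

/-- The subring `𝒜⁻ = ℤ[v⁻¹]` of the Laurent polynomial ring `𝒜 = ℤ[v, v⁻¹]`:
the subring generated by `v⁻¹ = T (-1)`.  An element `x ∈ 𝒜` lies in `v⁻¹𝒜⁻` if and
only if `v * x = T 1 * x ∈ 𝒜⁻`. -/
noncomputable def Aminus : Subring (LaurentPolynomial ℤ) :=
  Subring.closure {(T (-1) : LaurentPolynomial ℤ)}

/-- The subring of Laurent polynomials supported in nonpositive degrees. -/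
noncomputable def nonposSub : Subring (LaurentPolynomial ℤ) where
  carrier := {p | ∀ n : ℤ, 0 < n → p.coeff n = 0}
  zero_mem' := by intro n hn; rfl
  one_mem' := by
    intro n hn
    show (AddMonoidAlgebra.single (0:ℤ) (1:ℤ)).coeff n = 0
    rw [AddMonoidAlgebra.coeff_single, Finsupp.single_apply, if_neg (by omega)]
  add_mem' := by
    intro p q hp hq n hn
    show (p + q).coeff n = 0
    rw [AddMonoidAlgebra.coeff_add, Finsupp.add_apply, hp n hn, hq n hn, add_zero]
  neg_mem' := by
    intro p hp n hn
    show (-p).coeff n = 0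
    rw [AddMonoidAlgebra.coeff_neg, Finsupp.neg_apply, hp n hn, neg_zero]
  mul_mem' := by
    intro p q hp hq n hn
    by_contra h
    have hs : n ∈ (p * q).coeff.support := Finsupp.mem_support_iff.mpr h
    have := AddMonoidAlgebra.support_coeff_mul_subset p q hs
    rw [Finset.mem_add] at this
    obtain ⟨i, hi, j, hj, rfl⟩ := this
    have hi' : p.coeff i ≠ 0 := Finsupp.mem_support_iff.mp hi
    have hj' : q.coeff j ≠ 0 := Finsupp.mem_support_iff.mp hj
    have : i ≤ 0 := by by_contra h'; exact hi' (hp i (by omega))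
    have : j ≤ 0 := by by_contra h'; exact hj' (hq j (by omega))
    omega

lemma mem_aminus {p : LaurentPolynomial ℤ} (hp : p ∈ Aminus) :
    ∀ n : ℤ, 0 < n → p.coeff n = 0 := by
  have : Aminus ≤ nonposSub := by
    rw [Aminus, Subring.closure_le]
    intro q hq
    rcases Set.mem_singleton_iff.mp hq with rfl
    intro n hn
    show (AddMonoidAlgebra.single (-1:ℤ) (1:ℤ)).coeff n = 0
    rw [AddMonoidAlgebra.coeff_single, Finsupp.single_apply, if_neg (by omega)]
  exact this hp

lemma bdd_of_mem {y : LaurentPolynomial ℤ} (hy : T 1 * y ∈ Aminus) :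
    ∀ n : ℤ, -1 < n → y.coeff n = 0 := by
  intro n hn
  have := mem_aminus hy (n + 1) (by omega)
  rw [show (T 1 : LaurentPolynomial ℤ) = AddMonoidAlgebra.single (1:ℤ) (1:ℤ) from rfl,
    AddMonoidAlgebra.coeff_single_mul_apply, show (-1:ℤ) + (n + 1) = n by ring, one_mul] at this
  exact this
open LaurentPolynomial

lemma bdd_mul {p q : LaurentPolynomial ℤ} {a b : ℤ}
    (hp : ∀ m : ℤ, a < m → p.coeff m = 0) (hq : ∀ m : ℤ, b < m → q.coeff m = 0) :
    ∀ m : ℤ, a + b < m → (p * q).coeff m = 0 := by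
  intro m hm
  by_contra h
  have hs : m ∈ (p * q).coeff.support := Finsupp.mem_support_iff.mpr h
  have := AddMonoidAlgebra.support_coeff_mul_subset p q hs
  rw [Finset.mem_add] at this
  obtain ⟨i, hi, j, hj, rfl⟩ := this
  have hi' : p.coeff i ≠ 0 := Finsupp.mem_support_iff.mp hi
  have hj' : q.coeff j ≠ 0 := Finsupp.mem_support_iff.mp hj
  have : i ≤ a := by by_contra h'; exact hi' (hp i (by omega))
  have : j ≤ b := by by_contra h'; exact hj' (hq j (by omega))
  omega

lemma coeff_mul_top {p q : LaurentPolynomial ℤ} {a b : ℤ}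
    (hp : ∀ m : ℤ, a < m → p.coeff m = 0) (hq : ∀ m : ℤ, b < m → q.coeff m = 0) :
    (p * q).coeff (a + b) = p.coeff a * q.coeff b := by
  classical
  rw [AddMonoidAlgebra.coeff_mul, Finsupp.sum]
  rw [Finset.sum_eq_single a (fun i hi hne => ?_) (fun ha => ?_)]
  · rw [Finsupp.sum, Finset.sum_eq_single b (fun j hj hne => ?_) (fun hb => ?_)]
    · simp
    · rw [if_neg (by omega)]
    · rw [Finsupp.notMem_support_iff.mp hb, mul_zero, if_pos rfl]
  · have hi' : p.coeff i ≠ 0 := Finsupp.mem_support_iff.mp hi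
    have hia : i ≤ a := by by_contra h'; exact hi' (hp i (by omega))
    rw [Finsupp.sum]
    apply Finset.sum_eq_zero
    intro j hj
    have hj' : q.coeff j ≠ 0 := Finsupp.mem_support_iff.mp hj
    have : j ≤ b := by by_contra h'; exact hj' (hq j (by omega))
    rw [if_neg (by omega)]
  · rw [Finsupp.notMem_support_iff.mp ha, Finsupp.sum]
    apply Finset.sum_eq_zero
    intro j hj
    simp

lemma bar_coeff (bar : LaurentPolynomial ℤ →+* LaurentPolynomial ℤ)
    (hbar : ∀ n : ℤ, bar (T n) = T (-n)) (p : LaurentPolynomial ℤ) (n : ℤ) :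
    (bar p).coeff n = p.coeff (-n) := by
  induction p using LaurentPolynomial.induction_on' with
  | add p q hp hq =>
    rw [map_add, AddMonoidAlgebra.coeff_add, Finsupp.add_apply, AddMonoidAlgebra.coeff_add, Finsupp.add_apply, hp, hq]
  | C_mul_T m a =>
    have hCk : bar (C a) = C a := by
      rw [eq_intCast (LaurentPolynomial.C : ℤ →+* LaurentPolynomial ℤ) a, map_intCast]
    rw [map_mul, hCk, hbar, ← LaurentPolynomial.single_eq_C_mul_T,
      ← LaurentPolynomial.single_eq_C_mul_T, AddMonoidAlgebra.coeff_single, Finsupp.single_apply, AddMonoidAlgebra.coeff_single, Finsupp.single_apply]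
    by_cases h : m = -n
    · rw [if_pos (by omega), if_pos (by omega)]
    · rw [if_neg (by omega), if_neg (by omega)]

lemma one_coeff (m : ℤ) : (1 : LaurentPolynomial ℤ).coeff m = if (0:ℤ) = m then 1 else 0 := by
  rw [← T_zero]
  show (AddMonoidAlgebra.single (0:ℤ) (1:ℤ)).coeff m = _; rw [AddMonoidAlgebra.coeff_single]
  exact Finsupp.single_apply


/-- Let `𝒜 = ℤ[v, v⁻¹]`, `𝒜⁻ = ℤ[v⁻¹]`, and `bar : 𝒜 → 𝒜` the ring
involution with `v ↦ v⁻¹` (so `bar (T n) = T (-n)`).  Let `M` be a free `𝒜`-module with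
basis `(c w)_{w ∈ W}`, `B` a symmetric `𝒜`-bilinear form on `M` with
`B (c w) (c w') - δ_{w,w'} ∈ v⁻¹𝒜⁻`, and `D : M → M` an additive involution with
`D (a • m) = bar a • D m` fixing every `c w`.  If `x ∈ M` satisfies `D x = x` and
`B x x - 1 ∈ v⁻¹𝒜⁻`, then `x = c w` or `x = - c w` for some `w ∈ W`.
(Membership `y ∈ v⁻¹𝒜⁻` is expressed as `T 1 * y ∈ 𝒜⁻`.) -/
theorem almost_orthonormal_characterization {W M : Type*} [DecidableEq W]
    [AddCommGroup M] [Module (LaurentPolynomial ℤ) M]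
    (c : Module.Basis W (LaurentPolynomial ℤ) M)
    (B : M →ₗ[LaurentPolynomial ℤ] M →ₗ[LaurentPolynomial ℤ] LaurentPolynomial ℤ)
    (hBsymm : ∀ x y : M, B x y = B y x)
    (hortho : ∀ w w' : W,
      T 1 * (B (c w) (c w') - if w = w' then 1 else 0) ∈ Aminus)
    (bar : LaurentPolynomial ℤ →+* LaurentPolynomial ℤ)
    (hbar : ∀ n : ℤ, bar (T n) = T (-n))
    (D : M → M)
    (hDadd : ∀ x y : M, D (x + y) = D x + D y)
    (hDsmul : ∀ (a : LaurentPolynomial ℤ) (m : M), D (a • m) = bar a • D m)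
    (hDinv : ∀ m : M, D (D m) = m)
    (hDc : ∀ w : W, D (c w) = c w)
    (x : M) (hx : D x = x)
    (hxx : T 1 * (B x x - 1) ∈ Aminus) :
    ∃ w : W, x = c w ∨ x = -c w := by

  classical
  set a : W →₀ LaurentPolynomial ℤ := c.repr x with ha
  set s : Finset W := a.support with hs
  have hxsum : x = ∑ w ∈ s, a w • c w := by
    conv_lhs => rw [← c.linearCombination_repr x]
    rw [Finsupp.linearCombination_apply, Finsupp.sum]
  -- D x as a sum
  let Dh : M →+ M := AddMonoidHom.mk' D hDadd
  have hDx : D x = ∑ w ∈ s, bar (a w) • c w := by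
    conv_lhs => rw [hxsum]
    rw [show D (∑ w ∈ s, a w • c w) = Dh (∑ w ∈ s, a w • c w) from rfl, map_sum]
    apply Finset.sum_congr rfl
    intro w _
    show D (a w • c w) = _
    rw [hDsmul, hDc]
  -- coefficients are bar-invariant
  have hbarinv : ∀ w : W, bar (a w) = a w := by
    intro w
    by_cases hw : w ∈ s
    · have h1 : (∑ w' ∈ s, bar (a w') • (Finsupp.single w' (1:LaurentPolynomial ℤ))) = a := by
        calc ∑ w' ∈ s, bar (a w') • (Finsupp.single w' (1:LaurentPolynomial ℤ))
            = ∑ w' ∈ s, c.repr (bar (a w') • c w') := by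
              apply Finset.sum_congr rfl; intro w' _; rw [map_smul, Module.Basis.repr_self]
          _ = c.repr (∑ w' ∈ s, bar (a w') • c w') := by rw [map_sum]
          _ = c.repr (D x) := by rw [← hDx]
          _ = a := by rw [hx]
      have h2 := DFunLike.congr_fun h1 w
      simp only [Finset.sum_apply', Finsupp.smul_apply, Finsupp.single_apply, smul_eq_mul,
        mul_ite, mul_one, mul_zero, Finset.sum_ite_eq'] at h2
      rw [if_pos hw] at h2
      exact h2
    · have : a w = 0 := Finsupp.notMem_support_iff.mp hw
      rw [this, map_zero]
  have hsymm : ∀ (w : W) (n : ℤ), (a w).coeff n = (a w).coeff (-n) := by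
    intro w n
    conv_lhs => rw [← hbarinv w]
    exact bar_coeff bar hbar (a w) n
  -- bilinear expansion
  have hBexp : B x x = (∑ w ∈ s, a w * a w)
      + ∑ w ∈ s, ∑ w' ∈ s, a w * a w' *
        (B (c w) (c w') - if w = w' then 1 else 0) := by
    have e1 : B x x = ∑ w' ∈ s, ∑ w ∈ s, a w * a w' * B (c w) (c w') := by
      have e0 : B x x = ∑ w' ∈ s, a w' * B x (c w') := by
        conv_lhs => rw [hxsum]
        rw [map_sum]
        apply Finset.sum_congr rfl
        intro w' _
        rw [map_smul, smul_eq_mul]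
        conv_rhs => rw [hxsum]
      rw [e0]
      apply Finset.sum_congr rfl
      intro w' _
      have e3 : B x (c w') = ∑ w ∈ s, a w * B (c w) (c w') := by
        conv_lhs => rw [hxsum]
        rw [map_sum, LinearMap.coe_sum, Finset.sum_apply]
        apply Finset.sum_congr rfl
        intro w _
        rw [map_smul, LinearMap.smul_apply, smul_eq_mul]
      rw [e3, Finset.mul_sum]
      apply Finset.sum_congr rfl
      intro w _
      ring
    rw [e1, Finset.sum_comm]
    have e2 : ∀ w ∈ s, ∀ w' ∈ s, a w * a w' * B (c w) (c w')
        = a w * a w' * (if w = w' then 1 else 0)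
          + a w * a w' * (B (c w) (c w') - if w = w' then 1 else 0) := by
      intro w _ w' _; ring
    calc ∑ w ∈ s, ∑ w' ∈ s, a w * a w' * B (c w) (c w')
        = ∑ w ∈ s, ∑ w' ∈ s, (a w * a w' * (if w = w' then 1 else 0)
          + a w * a w' * (B (c w) (c w') - if w = w' then 1 else 0)) := by
          apply Finset.sum_congr rfl; intro w hw; apply Finset.sum_congr rfl; intro w' hw'
          exact e2 w hw w' hw'
      _ = (∑ w ∈ s, ∑ w' ∈ s, a w * a w' * (if w = w' then 1 else 0))
          + ∑ w ∈ s, ∑ w' ∈ s, a w * a w' *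
            (B (c w) (c w') - if w = w' then 1 else 0) := by
          rw [← Finset.sum_add_distrib]
          apply Finset.sum_congr rfl; intro w hw
          rw [← Finset.sum_add_distrib]
      _ = _ := by
          congr 1
          apply Finset.sum_congr rfl; intro w hw
          simp only [mul_ite, mul_one, mul_zero]
          rw [Finset.sum_ite_eq s w (fun w' => a w * a w'), if_pos hw]
  have hEbdd : ∀ w w' : W, ∀ m : ℤ, -1 < m →
      (B (c w) (c w') - if w = w' then 1 else 0).coeff m = 0 := fun w w' => bdd_of_mem (hortho w w')
  have hPbdd : ∀ m : ℤ, -1 < m → (B x x - 1).coeff m = 0 := bdd_of_mem hxx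
  -- master coefficient identity
  have master : ∀ b : ℤ, 0 ≤ b → (∀ w ∈ s, ∀ k : ℤ, b < k → (a w).coeff k = 0) →
      (∑ w ∈ s, (a w).coeff b * (a w).coeff b) = (1 : LaurentPolynomial ℤ).coeff (b + b) := by
    intro b hb hbd
    have h1 : (B x x).coeff (b + b) = (1 : LaurentPolynomial ℤ).coeff (b + b) := by
      have h0 := hPbdd (b + b) (by omega)
      rw [AddMonoidAlgebra.coeff_sub, Finsupp.sub_apply] at h0
      omega
    rw [hBexp, AddMonoidAlgebra.coeff_add, Finsupp.add_apply] at h1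
    have h2 : (∑ w ∈ s, ∑ w' ∈ s, a w * a w' *
        (B (c w) (c w') - if w = w' then 1 else 0)).coeff (b + b) = 0 := by
      rw [AddMonoidAlgebra.coeff_sum, Finset.sum_apply']
      apply Finset.sum_eq_zero
      intro w hw
      rw [AddMonoidAlgebra.coeff_sum, Finset.sum_apply']
      apply Finset.sum_eq_zero
      intro w' hw'
      exact bdd_mul (bdd_mul (hbd w hw) (hbd w' hw')) (hEbdd w w') (b + b) (by omega)
    have h3 : (∑ w ∈ s, a w * a w).coeff (b + b) = ∑ w ∈ s, (a w).coeff b * (a w).coeff b := by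
      rw [AddMonoidAlgebra.coeff_sum, Finset.sum_apply']
      apply Finset.sum_congr rfl
      intro w hw
      exact coeff_mul_top (hbd w hw) (hbd w hw)
    rw [h2, h3, add_zero] at h1
    exact h1
  -- Step 1: all coefficients in positive degree vanish
  have hno : ∀ w : W, ∀ n : ℤ, 0 < n → (a w).coeff n = 0 := by
    by_contra hcon
    push_neg at hcon
    obtain ⟨w, n, hn, hwn⟩ := hcon
    have hws : w ∈ s := Finsupp.mem_support_iff.mpr (fun h => hwn (by rw [h]; rfl))
    set t : Finset ℤ := s.biUnion (fun u => (a u).coeff.support) with ht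
    have hnt : n ∈ t := Finset.mem_biUnion.mpr ⟨w, hws, Finsupp.mem_support_iff.mpr hwn⟩
    have htne : t.Nonempty := ⟨n, hnt⟩
    set N : ℤ := t.max' htne with hN
    have hbd : ∀ u ∈ s, ∀ k : ℤ, N < k → (a u).coeff k = 0 := by
      intro u hu k hk
      by_contra h
      have : k ∈ t := Finset.mem_biUnion.mpr ⟨u, hu, Finsupp.mem_support_iff.mpr h⟩
      exact absurd (Finset.le_max' t k this) (by omega)
    have hNpos : 0 < N := lt_of_lt_of_le hn (Finset.le_max' t n hnt)
    have hm := master N (by omega) hbd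
    rw [one_coeff, if_neg (by omega)] at hm
    have hzero : ∀ u ∈ s, (a u).coeff N * (a u).coeff N = 0 := by
      rw [Finset.sum_eq_zero_iff_of_nonneg (fun u _ => mul_self_nonneg ((a u).coeff N))] at hm
      exact hm
    obtain ⟨u, hu, hNu⟩ := Finset.mem_biUnion.mp (t.max'_mem htne)
    exact absurd (mul_self_eq_zero.mp (hzero u hu)) (Finsupp.mem_support_iff.mp hNu)
  -- so all coefficients are constant
  have hconst : ∀ w : W, ∀ n : ℤ, n ≠ 0 → (a w).coeff n = 0 := by
    intro w n hn
    rcases lt_or_gt_of_ne hn with h | h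
    · rw [hsymm w n]; exact hno w (-n) (by omega)
    · exact hno w n h
  have hm0 := master 0 le_rfl (fun w hw k hk => hno w k hk)
  rw [one_coeff, if_pos (by omega : (0:ℤ) = 0 + 0)] at hm0
  -- find the unique w0
  have hw0 : ∃ w0 ∈ s, (a w0).coeff 0 ≠ 0 := by
    by_contra h
    push_neg at h
    rw [Finset.sum_eq_zero (fun w hw => by rw [h w hw, mul_zero])] at hm0
    exact absurd hm0 (by norm_num)
  obtain ⟨w0, hw0s, hw00⟩ := hw0
  have hrest : ∀ w ∈ s.erase w0, (a w).coeff 0 * (a w).coeff 0 = 0 := by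
    have hsplit : (a w0).coeff 0 * (a w0).coeff 0 + ∑ w ∈ s.erase w0, (a w).coeff 0 * (a w).coeff 0 = 1 := by
      rw [Finset.add_sum_erase s (fun w => (a w).coeff 0 * (a w).coeff 0) hw0s]; exact hm0
    have h1 : 1 ≤ (a w0).coeff 0 * (a w0).coeff 0 := mul_self_pos.mpr hw00
    have h2 : 0 ≤ ∑ w ∈ s.erase w0, (a w).coeff 0 * (a w).coeff 0 :=
      Finset.sum_nonneg (fun w _ => mul_self_nonneg _)
    have h3 : ∑ w ∈ s.erase w0, (a w).coeff 0 * (a w).coeff 0 = 0 := by omega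
    rw [Finset.sum_eq_zero_iff_of_nonneg (fun w _ => mul_self_nonneg _)] at h3
    exact h3
  have hone : (a w0).coeff 0 * (a w0).coeff 0 = 1 := by
    have hsplit : (a w0).coeff 0 * (a w0).coeff 0 + ∑ w ∈ s.erase w0, (a w).coeff 0 * (a w).coeff 0 = 1 := by
      rw [Finset.add_sum_erase s (fun w => (a w).coeff 0 * (a w).coeff 0) hw0s]; exact hm0
    rw [Finset.sum_eq_zero hrest] at hsplit
    omega
  set r : ℤ := (a w0).coeff 0 with hr
  -- a = single w0 r
  have haeq : a = Finsupp.single w0 ((r : LaurentPolynomial ℤ)) := by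
    apply Finsupp.ext
    intro w
    rw [Finsupp.single_apply]
    by_cases hww : w0 = w
    · subst hww
      rw [if_pos rfl]
      apply LaurentPolynomial.ext
      intro m
      have : ((r : ℤ) : LaurentPolynomial ℤ) = AddMonoidAlgebra.single (0:ℤ) r := by
        rw [LaurentPolynomial.single_eq_C]
        exact (eq_intCast (LaurentPolynomial.C : ℤ →+* LaurentPolynomial ℤ) r).symm
      rw [this]
      show (a w0).coeff m = (AddMonoidAlgebra.single (0:ℤ) r).coeff m
      rw [AddMonoidAlgebra.coeff_single, Finsupp.single_apply]
      by_cases hm : m = 0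
      · subst hm; rw [if_pos rfl]
      · rw [if_neg (by omega), hconst w0 m hm]
    · rw [if_neg hww]
      apply LaurentPolynomial.ext
      intro m
      show (a w).coeff m = (0 : LaurentPolynomial ℤ).coeff m
      by_cases hm : m = 0
      · subst hm
        by_cases hwm : w ∈ s
        · have : w ∈ s.erase w0 := Finset.mem_erase.mpr ⟨fun h => hww h.symm, hwm⟩
          exact mul_self_eq_zero.mp (hrest w this)
        · rw [Finsupp.notMem_support_iff.mp hwm]
      · exact hconst w m hm
  have hxval : x = (r : LaurentPolynomial ℤ) • c w0 := by
    apply c.repr.injective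
    rw [ha] at haeq
    rw [haeq, map_smul, Module.Basis.repr_self, Finsupp.smul_single, smul_eq_mul, mul_one]
  rcases mul_self_eq_one_iff.mp hone with h1 | h1
  · exact ⟨w0, Or.inl (by rw [hxval, h1]; simp)⟩
  · exact ⟨w0, Or.inr (by rw [hxval, h1]; simp)⟩
end
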